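/- Let α, β, γ, δ be real numbers. On ℝ³ with standard basis e₁, e₂, e₃, let the bracket be the bilinear antisymmetric map determined by [e₁,e₂] = -α•e₁ - β•e₂ - β•e₃, [e₁,e₃] = α•e₁ + β•e₂ + β•e₃, [e₂,e₃] = γ•e₁ + δ•e₂ + δ•e₃ (the Lie algebra of G₇), and let ∇ be the bilinear map ℝ³ → ℝ³ → ℝ³ determined on basis vectors by ∇_{e₁}e₁ = α•e₂ + α•e₃, ∇_{e₂}e₁ = β•e₂ + (β + γ/2)•e₃, ∇_{e₃}e₁ = -(β - γ/2)•e₂ - β•e₃, ∇_{e₁}e₂ = -α•e₁ + (γ/2)•e₃, ∇_{e₂}e₂ = -β•e₁ + δ•e₃, ∇_{e₃}e₂ = (β - γ/2)•e₁ - δ•e₃, ∇_{e₁}e₃ = α•e₁ + (γ/2)•e₂, ∇_{e₂}e₃ = (β + γ/2)•e₁ + δ•e₂, ∇_{e₃}e₃ = -β•e₁ - δ•e₂. Then for all X, Y, Z ∈ ℝ³, 2*g(∇_X Y, Z) = g([X,Y], Z) - g([Y,Z], X) + g([Z,X], Y), i.e. ∇ satisfies the Koszul formula characterizing the Levi-Civita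 connection of the left-invariant Lorentzian metric g. -/

import Mathlib

noncomputable section

/-- The standard basis of `ℝ³`. -/
def e₁ : Fin 3 → ℝ := ![1, 0, 0]
def e₂ : Fin 3 → ℝ := ![0, 1, 0]
def e₃ : Fin 3 → ℝ := ![0, 0, 1]

/-- The Lorentzian inner product with `e₁, e₂, e₃` pseudo-orthonormal, `e₃` timelike. -/
def g (X Y : Fin 3 → ℝ) : ℝ := X 0 * Y 0 + X 1 * Y 1 - X 2 * Y 2

/-- The bilinear antisymmetric bracket of the Lie algebra of `G₇`:
`[e₁,e₂] = -αe₁ - βe₂ - βe₃`, `[e₁,e₃] = αe₁ + βe₂ + βe₃`,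
`[e₂,e₃] = γe₁ + δe₂ + δe₃`. -/
def bracket (α β γ δ : ℝ) (X Y : Fin 3 → ℝ) : Fin 3 → ℝ :=
  (X 0 * Y 1 - X 1 * Y 0) • (-α • e₁ - β • e₂ - β • e₃) +
  (X 0 * Y 2 - X 2 * Y 0) • (α • e₁ + β • e₂ + β • e₃) +
  (X 1 * Y 2 - X 2 * Y 1) • (γ • e₁ + δ • e₂ + δ • e₃)

/-- The candidate Levi-Civita connection of `G₇`, extended bilinearly from its
values on the basis vectors. -/
def nabla (α β γ δ : ℝ) (X Y : Fin 3 → ℝ) : Fin 3 → ℝ :=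
  (X 0 * Y 0) • (α • e₂ + α • e₃) +
  (X 0 * Y 1) • (-α • e₁ + (γ/2) • e₃) +
  (X 0 * Y 2) • (α • e₁ + (γ/2) • e₂) +
  (X 1 * Y 0) • (β • e₂ + (β + γ/2) • e₃) +
  (X 1 * Y 1) • (-β • e₁ + δ • e₃) +
  (X 1 * Y 2) • ((β + γ/2) • e₁ + δ • e₂) +
  (X 2 * Y 0) • (-(β - γ/2) • e₂ - β • e₃) +
  (X 2 * Y 1) • ((β - γ/2) • e₁ - δ • e₃) +
  (X 2 * Y 2) • (-β • e₁ - δ • e₂)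

theorem bracket_eq (α β γ δ : ℝ) (X Y : Fin 3 → ℝ) :
    bracket α β γ δ X Y =
      ![-α * (X 0 * Y 1 - X 1 * Y 0) + α * (X 0 * Y 2 - X 2 * Y 0) + γ * (X 1 * Y 2 - X 2 * Y 1),
        -β * (X 0 * Y 1 - X 1 * Y 0) + β * (X 0 * Y 2 - X 2 * Y 0) + δ * (X 1 * Y 2 - X 2 * Y 1),
        -β * (X 0 * Y 1 - X 1 * Y 0) + β * (X 0 * Y 2 - X 2 * Y 0) + δ * (X 1 * Y 2 - X 2 * Y 1)] := by
  ext i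
  fin_cases i <;>
    simp only [bracket, e₁, e₂, e₃, Pi.add_apply, Pi.sub_apply, Pi.smul_apply,
      smul_eq_mul, Fin.zero_eta, Fin.mk_one, Fin.reduceFinMk, Matrix.cons_val] <;>
    ring

theorem nabla_eq (α β γ δ : ℝ) (X Y : Fin 3 → ℝ) :
    nabla α β γ δ X Y =
      ![-α * X 0 * Y 1 + α * X 0 * Y 2 - β * X 1 * Y 1 + (β + γ / 2) * X 1 * Y 2
          + (β - γ / 2) * X 2 * Y 1 - β * X 2 * Y 2,
        α * X 0 * Y 0 + γ / 2 * X 0 * Y 2 + β * X 1 * Y 0 + δ * X 1 * Y 2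
          - (β - γ / 2) * X 2 * Y 0 - δ * X 2 * Y 2,
        α * X 0 * Y 0 + γ / 2 * X 0 * Y 1 + (β + γ / 2) * X 1 * Y 0 + δ * X 1 * Y 1
          - β * X 2 * Y 0 - δ * X 2 * Y 1] := by
  ext i
  fin_cases i <;>
    simp only [nabla, e₁, e₂, e₃, Pi.add_apply, Pi.sub_apply, Pi.smul_apply,
      smul_eq_mul, Fin.zero_eta, Fin.mk_one, Fin.reduceFinMk, Matrix.cons_val] <;>
    ring

/-- `∇` satisfies the Koszul formula characterizing the Levi-Civita connection
of the left-invariant Lorentzian metric `g` on `G₇`. -/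
theorem G7_LeviCivita_Koszul (α β γ δ : ℝ) (X Y Z : Fin 3 → ℝ) :
    2 * g (nabla α β γ δ X Y) Z =
      g (bracket α β γ δ X Y) Z - g (bracket α β γ δ Y Z) X + g (bracket α β γ δ Z X) Y := by
  simp only [g, nabla_eq, bracket_eq, Matrix.cons_val_zero, Matrix.cons_val_one,
    Matrix.cons_val_two, Matrix.head_cons, Matrix.tail_cons]
  ring

end
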